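/- Negation case of the truth lemma: let S be a quantum modal structure, Σ an admissible set of formulas, S* the collapse of S with respect to Σ, and α a formula with α ∈ Σ and ¬α ∈ Σ. If for every world j ∈ W, α is true at [j] in S* if and only if α is true at j in S, then for every world i ∈ W, ¬α is true at [i] in S* if and only if ¬α is true at i in S. -/
import Mathlib


/-- Formulas of quantum modal logic: atoms, conjunction, negation, box. -/
inductive Formula : Type
  | atom : ℕ → Formula
  | and  : Formula → Formula → Formula
  | neg  : Formula → Formula
  | box  : Formula → Formula
deriving DecidableEq

/-- A set `X ⊆ W` is `R_Q`-closed. -/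
def RQClosed {W : Type} (RQ : W → W → Prop) (X : Set W) : Prop :=
  ∀ i : W, i ∈ X ↔ ∀ j : W, RQ i j → ∃ k : W, RQ j k ∧ k ∈ X

/-- A quantum modal structure `⟨W, R_Q, R_M, ρ⟩`. -/
structure QMS where
  W : Type
  nonempty : Nonempty W
  RQ : W → W → Prop
  RM : W → W → Prop
  val : ℕ → Set W
  RQ_refl : ∀ i, RQ i i
  RQ_symm : ∀ i j, RQ i j → RQ j i
  RM_forced : ∀ i l, RM i l → ∀ j, RQ i j → RM j l
  val_closed : ∀ p, RQClosed RQ (val p)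

/-- Truth of a formula at a world, relative to relations `RQ`, `RM` and valuation `v`. -/
def TruthOn {W : Type} (RQ RM : W → W → Prop) (v : ℕ → Set W) : W → Formula → Prop
  | i, .atom p  => i ∈ v p
  | i, .and α β => TruthOn RQ RM v i α ∧ TruthOn RQ RM v i β
  | i, .neg α   => ∀ j, RQ i j → ¬ TruthOn RQ RM v j α
  | i, .box α   => ∀ l, RM i l → TruthOn RQ RM v l α

/-- Truth at a world of a quantum modal structure. -/
def Truth (S : QMS) : S.W → Formula → Prop := TruthOn S.RQ S.RM S.val

/-- A set of formulas is admissible: closed under subformulas and containing `¬p`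
whenever it contains an atomic formula `p`. -/
def Admissible (Sg : Set Formula) : Prop :=
  (∀ α β, Formula.and α β ∈ Sg → α ∈ Sg ∧ β ∈ Sg) ∧
  (∀ α, Formula.neg α ∈ Sg → α ∈ Sg) ∧
  (∀ α, Formula.box α ∈ Sg → α ∈ Sg) ∧
  (∀ p, Formula.atom p ∈ Sg → Formula.neg (Formula.atom p) ∈ Sg)

/-- `i ∼ j` : worlds `i` and `j` satisfy the same formulas of `Sg`. -/
def Sim (S : QMS) (Sg : Set Formula) (i j : S.W) : Prop :=
  ∀ α ∈ Sg, (Truth S i α ↔ Truth S j α)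

/-- The setoid on worlds induced by an admissible set. -/
def worldSetoid (S : QMS) (Sg : Set Formula) : Setoid S.W where
  r := Sim S Sg
  iseqv := ⟨fun _ _ _ => Iff.rfl,
            fun h α hα => (h α hα).symm,
            fun h1 h2 α hα => (h1 α hα).trans (h2 α hα)⟩

/-- The set of worlds `W* = W/∼` of the collapse. -/
def CW (S : QMS) (Sg : Set Formula) : Type := Quotient (worldSetoid S Sg)

/-- The equivalence class `[i]` of a world `i`. -/
def cls (S : QMS) (Sg : Set Formula) (i : S.W) : CW S Sg :=
  Quotient.mk (worldSetoid S Sg) i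

/-- `R_Q*([i],[j])` iff there exist `i' ∼ i` and `j' ∼ j` with `R_Q(i',j')`. -/
def CRQ (S : QMS) (Sg : Set Formula) (x y : CW S Sg) : Prop :=
  ∃ i j : S.W, cls S Sg i = x ∧ cls S Sg j = y ∧ S.RQ i j

/-- `R_M*([i],[l])` iff for every `□α ∈ Σ`, `i ⊨ □α` implies `l ⊨ α`. -/
def CRM (S : QMS) (Sg : Set Formula) (x y : CW S Sg) : Prop :=
  ∃ i l : S.W, cls S Sg i = x ∧ cls S Sg l = y ∧
    ∀ α, Formula.box α ∈ Sg → Truth S i (Formula.box α) → Truth S l α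

/-- `ρ*(p) = {[i] : i ∈ ρ(p)}` if `p ∈ Σ`, and `ρ*(p) = ∅` otherwise. -/
def CVal (S : QMS) (Sg : Set Formula) (p : ℕ) : Set (CW S Sg) :=
  {x | Formula.atom p ∈ Sg ∧ ∃ i : S.W, cls S Sg i = x ∧ i ∈ S.val p}

/-- Truth at a world of the collapse `S*`, defined by the same truth clauses
using `R_Q*`, `R_M*`, `ρ*`. -/
def CTruth (S : QMS) (Sg : Set Formula) : CW S Sg → Formula → Prop :=
  TruthOn (CRQ S Sg) (CRM S Sg) (CVal S Sg)

/-- Derivability of sequents `Γ ⊢ Δ` in the sequent calculus of QML. -/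
inductive Deriv : Set Formula → Set Formula → Prop
  | ax (α : Formula) : Deriv {α} {α}
  | mem (Γ : Set Formula) (α : Formula) :
      Deriv Γ {Formula.box α, Formula.neg (Formula.box α)}
  | wkn (Γ Δ P Q : Set Formula) : Deriv Γ Δ → Deriv (P ∪ Γ) (Δ ∪ Q)
  | cut (Γ₁ Γ₂ Δ₁ Δ₂ : Set Formula) (α : Formula) :
      Deriv Γ₁ (insert α Δ₁) → Deriv (insert α Γ₂) Δ₂ → Deriv (Γ₁ ∪ Γ₂) (Δ₁ ∪ Δ₂)
  | andl1 (α β : Formula) (Γ Δ : Set Formula) :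
      Deriv (insert α Γ) Δ → Deriv (insert (Formula.and α β) Γ) Δ
  | andl2 (α β : Formula) (Γ Δ : Set Formula) :
      Deriv (insert β Γ) Δ → Deriv (insert (Formula.and α β) Γ) Δ
  | andr (α β : Formula) (Γ Δ : Set Formula) :
      Deriv Γ (insert α Δ) → Deriv Γ (insert β Δ) → Deriv Γ (insert (Formula.and α β) Δ)
  | negl (α : Formula) (Γ Δ : Set Formula) :
      Deriv Γ (insert α Δ) → Deriv (insert (Formula.neg α) Γ) Δ
  | negr (α : Formula) (Δ : Set Formula) :
      Deriv {α} Δ → Deriv (Formula.neg '' Δ) {Formula.neg α}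
  | negnegl (α : Formula) (Γ Δ : Set Formula) :
      Deriv (insert α Γ) Δ → Deriv (insert (Formula.neg (Formula.neg α)) Γ) Δ
  | negnegr (α : Formula) (Γ Δ : Set Formula) :
      Deriv Γ (insert α Δ) → Deriv Γ (insert (Formula.neg (Formula.neg α)) Δ)
  | k (α : Formula) (Γ : Set Formula) :
      Deriv Γ {α} → Deriv (Formula.box '' Γ) {Formula.box α}

/-- Negation case of the truth lemma. -/
theorem truth_lemma_neg (S : QMS) (Sg : Set Formula) (hadm : Admissible Sg)
    (α : Formula) (hα : α ∈ Sg) (hneg : Formula.neg α ∈ Sg)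
    (ih : ∀ j : S.W, CTruth S Sg (cls S Sg j) α ↔ Truth S j α) :
    ∀ i : S.W,
      CTruth S Sg (cls S Sg i) (Formula.neg α) ↔ Truth S i (Formula.neg α) := by
  intro i
  constructor
  · intro h j hij
    have hc : CRQ S Sg (cls S Sg i) (cls S Sg j) := ⟨i, j, rfl, rfl, hij⟩
    exact fun ht => h _ hc ((ih j).mpr ht)
  · intro h x hx hct
    obtain ⟨i', j', hi', hj', hij⟩ := hx
    have hsim : Sim S Sg i' i := Quotient.exact hi'
    have hneg' : Truth S i' (Formula.neg α) := (hsim _ hneg).mpr h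
    subst hj'
    exact hneg' j' hij ((ih j').mp hct)
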